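/- (Lemma 2, item 3, of the paper.) For all α, β, γ ∈ Φ_XY, the formula [α][β]γ ↔ [α ∧ β]γ is valid. -/
import Mathlib


namespace ConSHN

/-- Formulas of the language Φ_XY, over atomic propositions indexed by ℕ. -/
inductive FXY : Type
  | atom : ℕ → FXY
  | bot  : FXY
  | neg  : FXY → FXY
  | conj : FXY → FXY → FXY
  | X    : FXY → FXY
  | Y    : FXY → FXY
  deriving DecidableEq

/-- Formulas of the language Φ_ConSHN-BT. -/
inductive F : Type
  | atom : ℕ → F
  | bot  : F
  | neg  : F → F
  | conj : F → F → F
  | X    : F → F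
  | Y    : F → F
  | con  : FXY → F → F
  deriving DecidableEq

namespace FXY

def top : FXY := neg bot
def imp (a b : FXY) : FXY := neg (conj a (neg b))
def or (a b : FXY) : FXY := neg (conj (neg a) (neg b))
def iff (a b : FXY) : FXY := conj (imp a b) (imp b a)

/-- n-fold application of X. -/
def Xn : ℕ → FXY → FXY
  | 0, a => a
  | n+1, a => X (Xn n a)

/-- n-fold application of Y. -/
def Yn : ℕ → FXY → FXY
  | 0, a => a
  | n+1, a => Y (Yn n a)

/-- The embedding of Φ_XY into Φ_ConSHN-BT. -/
def toF : FXY → F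
  | atom p => .atom p
  | bot => .bot
  | neg a => .neg (toF a)
  | conj a b => .conj (toF a) (toF b)
  | X a => .X (toF a)
  | Y a => .Y (toF a)

/-- Purely propositional formulas (no occurrence of X or Y). -/
inductive IsPL : FXY → Prop
  | atom (p : ℕ) : IsPL (atom p)
  | bot : IsPL bot
  | neg {a} : IsPL a → IsPL (neg a)
  | conj {a b} : IsPL a → IsPL b → IsPL (conj a b)

/-- The language Φ_N-XY : β ::= Xⁿp | Xⁿ⊥ | Yⁿp | Yⁿ⊥ | ¬β | (β ∧ β). -/
inductive NXY : FXY → Prop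
  | xatom (n p : ℕ) : NXY (Xn n (atom p))
  | xbot (n : ℕ) : NXY (Xn n bot)
  | yatom (n p : ℕ) : NXY (Yn n (atom p))
  | ybot (n : ℕ) : NXY (Yn n bot)
  | neg {a} : NXY a → NXY (neg a)
  | conj {a b} : NXY a → NXY b → NXY (conj a b)

end FXY

namespace F

def top : F := neg bot
def imp (a b : F) : F := neg (conj a (neg b))
def or (a b : F) : F := neg (conj (neg a) (neg b))
def iff (a b : F) : F := conj (imp a b) (imp b a)

/-- ⟨α⟩φ := ¬[α]¬φ -/
def dcon (α : FXY) (φ : F) : F := neg (con α (neg φ))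

/-- □φ := [⊤]φ -/
def box (φ : F) : F := con FXY.top φ

/-- ◇φ := ¬□¬φ -/
def dia (φ : F) : F := neg (box (neg φ))

/-- Closed formulas of Φ_ConSHN-BT : χ ::= [α]φ | ¬χ | (χ ∧ χ). -/
inductive Closed : F → Prop
  | con (α : FXY) (φ : F) : Closed (con α φ)
  | neg {χ} : Closed χ → Closed (neg χ)
  | conj {χ₁ χ₂} : Closed χ₁ → Closed χ₂ → Closed (conj χ₁ χ₂)

/-- The language Φ_Con-XY : φ ::= Xⁿp | Xⁿ⊥ | Yⁿp | Yⁿ⊥ | ¬φ | (φ ∧ φ) | [β]φ, β ∈ Φ_N-XY. -/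
inductive ConXY : F → Prop
  | xatom (n p : ℕ) : ConXY (FXY.Xn n (.atom p)).toF
  | xbot (n : ℕ) : ConXY (FXY.Xn n .bot).toF
  | yatom (n p : ℕ) : ConXY (FXY.Yn n (.atom p)).toF
  | ybot (n : ℕ) : ConXY (FXY.Yn n .bot).toF
  | neg {φ} : ConXY φ → ConXY (neg φ)
  | conj {φ ψ} : ConXY φ → ConXY ψ → ConXY (conj φ ψ)
  | con {β : FXY} {φ} : β.NXY → ConXY φ → ConXY (con β φ)

/-- The language Φ_One□-XY : φ ::= β | ¬φ | (φ ∧ φ) | □β, β ∈ Φ_N-XY. -/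
inductive OneBox : F → Prop
  | base {β : FXY} : β.NXY → OneBox β.toF
  | neg {φ} : OneBox φ → OneBox (neg φ)
  | conj {φ ψ} : OneBox φ → OneBox ψ → OneBox (conj φ ψ)
  | box {β : FXY} : β.NXY → OneBox (box β.toF)

end F

/-- A branching-time model. -/
structure Model where
  W : Type
  lt : W → W → Prop
  V : ℕ → Set W
  nonempty : Nonempty W
  serial : ∀ w, ∃ v, lt w v
  root : W
  reach : ∀ w : W, ∃! l : List W,
    List.Chain' lt l ∧ l.head? = some root ∧ l.getLast? = some w

/-- The set TL(M) of timelines of the model M. -/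
def Timeline (M : Model) : Set (ℕ → M.W) :=
  {π | π 0 = M.root ∧ ∀ i, M.lt (π i) (π (i + 1))}

/-- AT(C): the acceptable timelines by a context C (AT(∅) = TL(M)). -/
def AT (M : Model) (C : Set (Set (ℕ → M.W))) : Set (ℕ → M.W) :=
  Timeline M ∩ ⋂₀ C

/-- Truth of Φ_XY formulas at (M, π, i) (independent of contexts). -/
def satXY (M : Model) (π : ℕ → M.W) : ℕ → FXY → Prop
  | i, .atom p => π i ∈ M.V p
  | _, .bot => False
  | i, .neg a => ¬ satXY M π i a
  | i, .conj a b => satXY M π i a ∧ satXY M π i b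
  | i, .X a => satXY M π (i + 1) a
  | i, .Y a => 0 < i ∧ satXY M π (i - 1) a

/-- The indefeasible ontic rule ⟨⟨α⟩⟩_i generated by α at instant i. -/
def ruleOf (M : Model) (α : FXY) (i : ℕ) : Set (ℕ → M.W) :=
  {π | π ∈ Timeline M ∧ satXY M π i α}

/-- The update C + α@i of a context C with α at instant i. -/
def upd (M : Model) (C : Set (Set (ℕ → M.W))) (α : FXY) (i : ℕ) :
    Set (Set (ℕ → M.W)) :=
  insert (ruleOf M α i) C

/-- Truth of Φ_ConSHN-BT formulas at (M, C, π, i). -/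
def sat (M : Model) : Set (Set (ℕ → M.W)) → (ℕ → M.W) → ℕ → F → Prop
  | _, π, i, .atom p => π i ∈ M.V p
  | _, _, _, .bot => False
  | C, π, i, .neg φ => ¬ sat M C π i φ
  | C, π, i, .conj φ ψ => sat M C π i φ ∧ sat M C π i ψ
  | C, π, i, .X φ => sat M C π (i + 1) φ
  | C, π, i, .Y φ => 0 < i ∧ sat M C π (i - 1) φ
  | C, π, i, .con α φ =>
      ∀ π' ∈ AT M (upd M C α i), sat M (upd M C α i) π' i φ

/-- C is a context for M: a finite set of sets of timelines. -/
def IsContext (M : Model) (C : Set (Set (ℕ → M.W))) : Prop :=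
  C.Finite ∧ ∀ R ∈ C, R ⊆ Timeline M

/-- Validity: truth at every contextualized pointed model. -/
def Valid (φ : F) : Prop :=
  ∀ (M : Model) (C : Set (Set (ℕ → M.W))) (π : ℕ → M.W) (i : ℕ),
    IsContext M C → π ∈ AT M C → sat M C π i φ

/-- Satisfiability: truth at some contextualized pointed model. -/
def Satisfiable (φ : F) : Prop :=
  ∃ (M : Model) (C : Set (Set (ℕ → M.W))) (π : ℕ → M.W) (i : ℕ),
    IsContext M C ∧ π ∈ AT M C ∧ sat M C π i φ

/-- Propositional evaluation: ⊥, ¬, ∧ are interpreted, all other formulas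
are treated as propositional atoms evaluated by v. -/
def evalProp (v : F → Prop) : F → Prop
  | .bot => False
  | .neg φ => ¬ evalProp v φ
  | .conj φ ψ => evalProp v φ ∧ evalProp v ψ
  | φ => v φ

/-- φ is a propositional tautology. -/
def Taut (φ : F) : Prop := ∀ v : F → Prop, evalProp v φ

end ConSHN

open ConSHN


lemma sat_toF (M : Model) (C : Set (Set (ℕ → M.W))) (π : ℕ → M.W) (i : ℕ)
    (γ : FXY) : sat M C π i γ.toF ↔ satXY M π i γ := by
  induction γ generalizing C i with
  | atom p => rfl
  | bot => rfl
  | neg a ih => simp [FXY.toF, sat, satXY, ih]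
  | conj a b iha ihb => simp [FXY.toF, sat, satXY, iha, ihb]
  | X a ih => simp [FXY.toF, sat, satXY, ih]
  | Y a ih => simp [FXY.toF, sat, satXY, ih]

lemma AT_upd (M : Model) (C : Set (Set (ℕ → M.W))) (α : FXY) (i : ℕ) :
    AT M (upd M C α i) = AT M C ∩ ruleOf M α i := by
  ext π
  simp only [AT, upd, Set.sInter_insert, Set.mem_inter_iff]
  tauto

lemma ruleOf_conj (M : Model) (α β : FXY) (i : ℕ) :
    ruleOf M (.conj α β) i = ruleOf M α i ∩ ruleOf M β i := by
  ext π
  simp only [ruleOf, satXY, Set.mem_inter_iff, Set.mem_setOf_eq]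
  tauto

lemma key (M : Model) (C : Set (Set (ℕ → M.W))) (π : ℕ → M.W) (i : ℕ)
    (α β γ : FXY) :
    sat M C π i (.con α (.con β γ.toF)) ↔
      sat M C π i (.con (.conj α β) γ.toF) := by
  have hset : AT M (upd M (upd M C α i) β i) = AT M (upd M C (.conj α β) i) := by
    rw [AT_upd, AT_upd, AT_upd, ruleOf_conj, Set.inter_assoc]
  constructor
  · intro h π' hπ'
    rw [sat_toF]
    have h1 : π' ∈ AT M (upd M C α i) := by
      rw [AT_upd] at hπ' ⊢
      rw [ruleOf_conj] at hπ'
      exact ⟨hπ'.1, hπ'.2.1⟩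
    have h2 : π' ∈ AT M (upd M (upd M C α i) β i) := by rw [hset]; exact hπ'
    have := h π' h1 π' h2
    rwa [sat_toF] at this
  · intro h π' _ π'' hπ''
    rw [sat_toF]
    have h2 : π'' ∈ AT M (upd M C (.conj α β) i) := by rw [← hset]; exact hπ''
    have := h π'' h2
    rwa [sat_toF] at this

/-- Lemma 2, item 3: [α][β]γ ↔ [α ∧ β]γ is valid for α, β, γ ∈ Φ_XY. -/
theorem lemma_con_con :
    ∀ α β γ : FXY,
      Valid (F.iff (.con α (.con β γ.toF)) (.con (.conj α β) γ.toF)) := by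
  intro α β γ M C π i _ _
  have hk := key M C π i α β γ
  simp only [F.iff, F.imp, sat]
  tauto
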